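/- Let θ ∈ [0,1], σ ≥ 1, and Z_1,...,Z_m i.i.d. Bernoulli with mean Φ(θ/σ). Define the estimator θ̂ = τ_{[0,1]}(σ Φ^{−1}((1/m)∑_{i=1}^m Z_i)). Then there exists a universal constant C > 0 such that E[(θ̂ − θ)²] ≤ C·min(σ²/m, 1). -/

import Mathlib

/-! On `[0, σ⁻¹] ⊆ [-1, 1]` the standard normal density is at least `1/6`, so `Φ⁻¹` is
`6`-Lipschitz on `[Φ 0, Φ σ⁻¹]`. Read through `Φ`, the rescaled estimator `θ̂ / σ` is the
empirical frequency clamped to this interval, and clamping is `1`-Lipschitz; since `θ / σ` lies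
in `[0, σ⁻¹]`, this gives `|θ̂ - θ| ≤ 6σ |Z̄ - Φ(θ/σ)|`. Hence `E(θ̂ - θ)² ≤ 36σ² Var Z̄ ≤ 9σ²/m`,
while `E(θ̂ - θ)² ≤ 1` holds trivially because `θ̂, θ ∈ [0, 1]`. -/

open Real MeasureTheory ProbabilityTheory

/-- Standard normal density. -/
noncomputable def stdNormalPDF (t : ℝ) : ℝ :=
  (Real.sqrt (2 * π))⁻¹ * Real.exp (-t ^ 2 / 2)

/-- Standard normal cumulative distribution function. -/
noncomputable def stdNormalCDF (t : ℝ) : ℝ :=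
  ∫ s in Set.Iic t, stdNormalPDF s

/-- Inverse of the standard normal CDF (for `p ∈ (0,1)`; junk values at the
extended points are handled in `estMap` below). -/
noncomputable def stdNormalInv (p : ℝ) : ℝ :=
  sInf {t : ℝ | p ≤ stdNormalCDF t}

/-- The map `p ↦ τ_{[0,1]}(σ·Φ⁻¹(p))`, with the conventions
`Φ⁻¹(p) = +∞` for `p ≥ 1` (so the truncated value is `1`) and
`Φ⁻¹(p) = -∞` for `p ≤ 0` (so the truncated value is `0`). -/
noncomputable def estMap (σ p : ℝ) : ℝ :=
  if 1 ≤ p then 1 else max 0 (min 1 (σ * stdNormalInv p))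

open Set

lemma stdNormalPDF_eq_gaussianPDFReal : stdNormalPDF = gaussianPDFReal 0 1 := by
  ext t
  simp [stdNormalPDF, gaussianPDFReal]

lemma stdNormalPDF_pos (t : ℝ) : 0 < stdNormalPDF t := by
  rw [stdNormalPDF_eq_gaussianPDFReal]
  exact gaussianPDFReal_pos 0 1 t one_ne_zero

lemma integrable_stdNormalPDF : Integrable stdNormalPDF := by
  rw [stdNormalPDF_eq_gaussianPDFReal]
  exact integrable_gaussianPDFReal 0 1

lemma inv_six_le_stdNormalPDF {t : ℝ} (ht : |t| ≤ 1) : (6 : ℝ)⁻¹ ≤ stdNormalPDF t := by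
  have hsqrt : √(2 * π) ≤ 3 := Real.sqrt_le_iff.2 ⟨by norm_num, by nlinarith [pi_lt_d2]⟩
  have hexp : exp (-(1 / 2)) ≤ exp (-t ^ 2 / 2) := by
    gcongr
    nlinarith [sq_abs t, abs_nonneg t]
  have hhalf : (2 : ℝ)⁻¹ ≤ exp (-(1 / 2)) := by
    rw [exp_neg, inv_le_inv₀ (by norm_num) (exp_pos _)]
    -- `exp (1 / 2) ≤ 2` because `e < 4`
    have hsq : exp (1 / 2) * exp (1 / 2) = exp 1 := by rw [← exp_add]; norm_num
    nlinarith [exp_one_lt_d9, exp_pos (1 / 2 : ℝ)]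
  calc (6 : ℝ)⁻¹ = 3⁻¹ * 2⁻¹ := by norm_num
    _ ≤ (√(2 * π))⁻¹ * exp (-t ^ 2 / 2) := by
      gcongr
      exact hhalf.trans hexp

lemma stdNormalCDF_sub (a b : ℝ) :
    stdNormalCDF b - stdNormalCDF a = ∫ s in a..b, stdNormalPDF s :=
  intervalIntegral.integral_Iic_sub_Iic integrable_stdNormalPDF.integrableOn
    integrable_stdNormalPDF.integrableOn

lemma stdNormalCDF_eq_cdf : stdNormalCDF = cdf (gaussianReal 0 1) := by
  ext t
  rw [cdf_eq_real, measureReal_def, gaussianReal_apply_eq_integral 0 one_ne_zero,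
    ENNReal.toReal_ofReal
      (setIntegral_nonneg measurableSet_Iic fun x _ => gaussianPDFReal_nonneg 0 1 x),
    stdNormalCDF, stdNormalPDF_eq_gaussianPDFReal]

lemma stdNormalCDF_strictMono : StrictMono stdNormalCDF := fun a b hab => by
  have hpos : 0 < ∫ s in a..b, stdNormalPDF s :=
    intervalIntegral.intervalIntegral_pos_of_pos integrable_stdNormalPDF.intervalIntegrable
      stdNormalPDF_pos hab
  linarith [stdNormalCDF_sub a b]

lemma continuous_stdNormalCDF : Continuous stdNormalCDF := by
  have h : stdNormalCDF = fun b => stdNormalCDF 0 + ∫ s in (0 : ℝ)..b, stdNormalPDF s := by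
    ext b
    linarith [stdNormalCDF_sub 0 b]
  rw [h]
  exact continuous_const.add <| intervalIntegral.continuous_primitive
    (fun _ _ => integrable_stdNormalPDF.intervalIntegrable) 0

lemma stdNormalCDF_lt_one (t : ℝ) : stdNormalCDF t < 1 := by
  calc stdNormalCDF t < stdNormalCDF (t + 1) := stdNormalCDF_strictMono (lt_add_one t)
    _ ≤ 1 := by rw [stdNormalCDF_eq_cdf]; exact cdf_le_one _ _

lemma tendsto_stdNormalCDF_atTop : Filter.Tendsto stdNormalCDF Filter.atTop (nhds 1) := by
  rw [stdNormalCDF_eq_cdf]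
  exact tendsto_cdf_atTop _

lemma abs_sub_le_six_mul_abs_stdNormalCDF_sub {a b : ℝ} (ha : a ∈ Icc (-1) 1)
    (hb : b ∈ Icc (-1) 1) : |b - a| ≤ 6 * |stdNormalCDF b - stdNormalCDF a| := by
  wlog hab : a ≤ b generalizing a b
  · rw [abs_sub_comm, abs_sub_comm (stdNormalCDF b)]
    exact this hb ha (le_of_not_ge hab)
  have hmass : (6 : ℝ)⁻¹ * (b - a) ≤ ∫ s in a..b, stdNormalPDF s := by
    rw [intervalIntegral.integral_of_le hab]
    have h := setIntegral_ge_of_const_le measurableSet_Ioc measure_Ioc_lt_top.ne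
      (fun s hs => inv_six_le_stdNormalPDF (abs_le.2
        ⟨ha.1.trans hs.1.le, hs.2.trans hb.2⟩)) integrable_stdNormalPDF.integrableOn
    rwa [Real.volume_real_Ioc_of_le hab, smul_eq_mul, mul_comm] at h
  rw [stdNormalCDF_sub, abs_of_nonneg (sub_nonneg.2 hab)]
  calc b - a = 6 * (6⁻¹ * (b - a)) := by ring
    _ ≤ 6 * |∫ s in a..b, stdNormalPDF s| := by gcongr; exact hmass.trans (le_abs_self _)

lemma stdNormalInv_stdNormalCDF (t : ℝ) : stdNormalInv (stdNormalCDF t) = t := by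
  have h : {s | stdNormalCDF t ≤ stdNormalCDF s} = Ici t := by
    ext s
    exact stdNormalCDF_strictMono.le_iff_le
  rw [stdNormalInv, h, csInf_Ici]

lemma stdNormalInv_nonpos {x : ℝ} (hx : x ≤ stdNormalCDF 0) : stdNormalInv x ≤ 0 := by
  by_cases hbdd : BddBelow {t | x ≤ stdNormalCDF t}
  · exact csInf_le hbdd hx
  · rw [stdNormalInv, Real.sInf_of_not_bddBelow hbdd]

lemma le_stdNormalInv {a x : ℝ} (hx : x < 1) (hax : stdNormalCDF a ≤ x) :
    a ≤ stdNormalInv x := by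
  obtain ⟨t, ht⟩ := (tendsto_stdNormalCDF_atTop.eventually (eventually_ge_nhds hx)).exists
  exact le_csInf ⟨t, ht⟩ fun s hs => stdNormalCDF_strictMono.le_iff_le.1 (hax.trans hs)

lemma estMap_mem_Icc (σ x : ℝ) : estMap σ x ∈ Icc 0 1 := by
  unfold estMap
  split_ifs
  · exact right_mem_Icc.2 zero_le_one
  · exact ⟨le_max_left _ _, max_le zero_le_one (min_le_left _ _)⟩

lemma stdNormalCDF_estMap_div {σ : ℝ} (hσ : 0 < σ) (x : ℝ) :
    stdNormalCDF (estMap σ x / σ) = max (stdNormalCDF 0) (min (stdNormalCDF σ⁻¹) x) := by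
  have hΦ : stdNormalCDF 0 < stdNormalCDF σ⁻¹ := stdNormalCDF_strictMono (inv_pos.2 hσ)
  by_cases hx1 : 1 ≤ x
  · have hlt := stdNormalCDF_lt_one σ⁻¹
    rw [estMap, if_pos hx1, one_div, min_eq_left (by linarith), max_eq_right hΦ.le]
  rcases le_or_gt x (stdNormalCDF 0) with hlow | hlow
  · have hinv : σ * stdNormalInv x ≤ 0 :=
      mul_nonpos_of_nonneg_of_nonpos hσ.le (stdNormalInv_nonpos hlow)
    rw [estMap, if_neg hx1, min_eq_right (hinv.trans zero_le_one), max_eq_left hinv,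
      zero_div, min_eq_right (hlow.trans hΦ.le), max_eq_left hlow]
  rcases le_or_gt (stdNormalCDF σ⁻¹) x with hhigh | hhigh
  · have hinv : 1 ≤ σ * stdNormalInv x := calc
      1 = σ * σ⁻¹ := (mul_inv_cancel₀ hσ.ne').symm
      _ ≤ σ * stdNormalInv x := by gcongr; exact le_stdNormalInv (not_le.1 hx1) hhigh
    rw [estMap, if_neg hx1, min_eq_left hinv, max_eq_right zero_le_one, one_div,
      min_eq_left hhigh, max_eq_right hΦ.le]
  obtain ⟨t, ⟨ht0, htσ⟩, rfl⟩ :=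
    intermediate_value_Icc (inv_pos.2 hσ).le continuous_stdNormalCDF.continuousOn
      ⟨hlow.le, hhigh.le⟩
  have hσt : σ * t ≤ 1 := calc
    σ * t ≤ σ * σ⁻¹ := by gcongr
    _ = 1 := mul_inv_cancel₀ hσ.ne'
  rw [estMap, if_neg hx1, stdNormalInv_stdNormalCDF, min_eq_right hσt,
    max_eq_right (mul_nonneg hσ.le ht0), mul_div_cancel_left₀ t hσ.ne', min_eq_right hhigh.le,
    max_eq_right hlow.le]

lemma abs_estMap_sub_le {σ θ : ℝ} (hσ : 1 ≤ σ) (hθ : θ ∈ Icc 0 1) (x : ℝ) :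
    |estMap σ x - θ| ≤ 6 * σ * |x - stdNormalCDF (θ / σ)| := by
  have hσ0 : 0 < σ := zero_lt_one.trans_le hσ
  have hmem {y : ℝ} (hy : y ∈ Icc 0 1) : y / σ ∈ Icc (-1) 1 :=
    ⟨by linarith [div_nonneg hy.1 hσ0.le], (div_le_self hy.1 hσ).trans hy.2⟩
  have hΦ : stdNormalCDF 0 ≤ stdNormalCDF σ⁻¹ := stdNormalCDF_strictMono.monotone (by positivity)
  have hθσ : θ / σ ∈ Icc 0 σ⁻¹ :=
    ⟨div_nonneg hθ.1 hσ0.le, by rw [← one_div]; gcongr; exact hθ.2⟩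
  have hΦθ : stdNormalCDF (θ / σ) ∈ Icc (stdNormalCDF 0) (stdNormalCDF σ⁻¹) :=
    ⟨stdNormalCDF_strictMono.monotone hθσ.1, stdNormalCDF_strictMono.monotone hθσ.2⟩
  calc |estMap σ x - θ| = σ * |estMap σ x / σ - θ / σ| := by
        rw [← sub_div, abs_div, abs_of_pos hσ0, mul_div_cancel₀ _ hσ0.ne']
    _ ≤ σ * (6 * |stdNormalCDF (estMap σ x / σ) - stdNormalCDF (θ / σ)|) := by
        gcongr
        exact abs_sub_le_six_mul_abs_stdNormalCDF_sub (hmem hθ) (hmem (estMap_mem_Icc σ x))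
    _ ≤ σ * (6 * |x - stdNormalCDF (θ / σ)|) := by
        have hproj := abs_projIcc_sub_projIcc hΦ (c := x) (d := stdNormalCDF (θ / σ))
        rw [projIcc_of_mem hΦ hΦθ, coe_projIcc] at hproj
        rw [stdNormalCDF_estMap_div hσ0]
        gcongr
    _ = 6 * σ * |x - stdNormalCDF (θ / σ)| := by ring

lemma sq_estMap_sub_le {σ θ : ℝ} (hσ : 1 ≤ σ) (hθ : θ ∈ Icc 0 1) (x : ℝ) :
    (estMap σ x - θ) ^ 2 ≤ 36 * σ ^ 2 * (x - stdNormalCDF (θ / σ)) ^ 2 := by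
  have h := pow_le_pow_left₀ (abs_nonneg _) (abs_estMap_sub_le hσ hθ x) 2
  rwa [sq_abs, mul_pow, sq_abs, mul_pow, show (6 : ℝ) ^ 2 = 36 by norm_num] at h

lemma sq_estMap_sub_le_one {θ : ℝ} (hθ : θ ∈ Icc 0 1) (σ x : ℝ) : (estMap σ x - θ) ^ 2 ≤ 1 := by
  obtain ⟨h0, h1⟩ := estMap_mem_Icc σ x
  nlinarith [hθ.1, hθ.2]

section EmpiricalMean

variable {Ω ι : Type*} [MeasurableSpace Ω] {μ : Measure Ω} [Fintype ι] {Z : ι → Ω → ℝ}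

lemma integral_sum_div_card [Nonempty ι] (hZ : ∀ i, Integrable (Z i) μ) {p : ℝ}
    (hmean : ∀ i, μ[Z i] = p) : μ[fun ω => (∑ i, Z i ω) / Fintype.card ι] = p := by
  rw [integral_div, integral_finsetSum _ fun i _ => hZ i]
  simp [hmean]

lemma variance_sum_div_card_le [IsProbabilityMeasure μ] {a b : ℝ}
    (hZ : ∀ i, AEMeasurable (Z i) μ) (hab : ∀ i, ∀ᵐ ω ∂μ, Z i ω ∈ Icc a b)
    (hind : Pairwise fun i j => Z i ⟂ᵢ[μ] Z j) :
    Var[fun ω => (∑ i, Z i ω) / Fintype.card ι; μ] ≤ ((b - a) / 2) ^ 2 / Fintype.card ι := by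
  have hvar : Var[∑ i, Z i; μ] = ∑ i, Var[Z i; μ] :=
    IndepFun.variance_sum (fun i _ => memLp_of_bounded (hab i) (hZ i).aestronglyMeasurable 2)
      fun i _ j _ hij => hind hij
  have hsum : ∑ i, Var[Z i; μ] ≤ Fintype.card ι * ((b - a) / 2) ^ 2 := by
    have h := Finset.sum_le_card_nsmul Finset.univ (fun i => Var[Z i; μ]) _
      fun i _ => variance_le_sq_of_bounded (hab i) (hZ i)
    rwa [Finset.card_univ, nsmul_eq_mul] at h
  have hmean : (fun ω => (∑ i, Z i ω) / Fintype.card ι) =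
      fun ω => (Fintype.card ι : ℝ)⁻¹ * (∑ i, Z i) ω := by
    ext ω
    rw [Finset.sum_apply, div_eq_inv_mul]
  rw [hmean, variance_const_mul, hvar]
  rcases eq_or_ne (Fintype.card ι : ℝ) 0 with h0 | h0
  · simp [h0]
  · calc (↑(Fintype.card ι))⁻¹ ^ 2 * ∑ i, Var[Z i; μ]
        ≤ (↑(Fintype.card ι))⁻¹ ^ 2 * (Fintype.card ι * ((b - a) / 2) ^ 2) := by gcongr
      _ = _ := by field_simp

end EmpiricalMean

lemma integral_sq_comp_sub_le_mul_variance {Ω : Type*} [MeasurableSpace Ω] {μ : Measure Ω}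
    [IsFiniteMeasure μ] {X : Ω → ℝ} (hX : MemLp X 2 μ) {f : ℝ → ℝ} {c L : ℝ}
    (hf : ∀ x, (f x - c) ^ 2 ≤ L * (x - μ[X]) ^ 2) :
    ∫ ω, (f (X ω) - c) ^ 2 ∂μ ≤ L * Var[X; μ] := by
  rw [variance_eq_integral hX.aemeasurable, ← integral_const_mul]
  exact integral_mono_of_nonneg (ae_of_all _ fun _ => sq_nonneg _)
    ((hX.sub (memLp_const _)).integrable_sq.const_mul L) (ae_of_all _ fun ω => hf (X ω))

/-- One-bit distributed estimation with `σ ≥ 1`: if `Z_1, ..., Z_m` are i.i.d.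
Bernoulli with mean `Φ(θ/σ)` and `θ̂ = τ_{[0,1]}(σ·Φ⁻¹((1/m)∑ Z_i))`, then
`E[(θ̂ - θ)²] ≤ C·min(σ²/m, 1)` for a universal constant `C > 0`. -/
theorem one_bit_estimator_mse :
    ∃ C : ℝ, C > 0 ∧
      ∀ (Ω : Type) (_ : MeasurableSpace Ω) (μ : Measure Ω), IsProbabilityMeasure μ →
      ∀ (m : ℕ), 1 ≤ m →
      ∀ (θ σ : ℝ), θ ∈ Set.Icc (0 : ℝ) 1 → 1 ≤ σ →
      ∀ (Z : Fin m → Ω → ℝ),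
        (∀ i, Measurable (Z i)) →
        (∀ i ω, Z i ω = 0 ∨ Z i ω = 1) →
        iIndepFun Z μ →
        (∀ i, ∫ ω, Z i ω ∂μ = stdNormalCDF (θ / σ)) →
        ∫ ω, (estMap σ ((∑ i, Z i ω) / m) - θ) ^ 2 ∂μ ≤
          C * min (σ ^ 2 / m) 1 := by
  refine ⟨9, by norm_num, ?_⟩
  intro Ω _ μ _ m hm θ σ hθ hσ Z hZ hZ01 hind hmean
  have : Nonempty (Fin m) := ⟨⟨0, hm⟩⟩
  have hZ_Icc (i : Fin m) : ∀ᵐ ω ∂μ, Z i ω ∈ Icc (0 : ℝ) 1 :=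
    ae_of_all _ fun ω => by rcases hZ01 i ω with h | h <;> simp [h]
  have hZ_memLp (i : Fin m) : MemLp (Z i) 2 μ :=
    memLp_of_bounded (hZ_Icc i) (hZ i).aestronglyMeasurable 2
  set S : Ω → ℝ := fun ω => (∑ i, Z i ω) / m
  have hS : MemLp S 2 μ := by
    simpa [S, div_eq_mul_inv] using (memLp_finsetSum _ fun i _ => hZ_memLp i).mul_const (m : ℝ)⁻¹
  have hS_mean : μ[S] = stdNormalCDF (θ / σ) := by
    simpa using integral_sum_div_card (fun i => (hZ_memLp i).integrable one_le_two) hmean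
  have hS_var : Var[S; μ] ≤ ((1 - 0) / 2) ^ 2 / m := by
    simpa only [Fintype.card_fin] using variance_sum_div_card_le (fun i => (hZ i).aemeasurable) hZ_Icc
      fun i j hij => hind.indepFun hij
  have hlip : ∫ ω, (estMap σ (S ω) - θ) ^ 2 ∂μ ≤ 36 * σ ^ 2 * Var[S; μ] :=
    integral_sq_comp_sub_le_mul_variance hS fun x => hS_mean ▸ sq_estMap_sub_le hσ hθ x
  have hbdd : ∫ ω, (estMap σ (S ω) - θ) ^ 2 ∂μ ≤ 1 := by
    simpa using integral_mono_of_nonneg (ae_of_all μ fun ω => sq_nonneg _) (integrable_const 1)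
      (ae_of_all μ fun ω => sq_estMap_sub_le_one hθ σ (S ω))
  calc ∫ ω, (estMap σ (S ω) - θ) ^ 2 ∂μ ≤ min (36 * σ ^ 2 * (((1 - 0) / 2) ^ 2 / m)) 1 :=
        le_min (hlip.trans (by gcongr)) hbdd
    _ ≤ 9 * min (σ ^ 2 / m) 1 := by
        rw [mul_min_of_nonneg _ _ (by norm_num : (0 : ℝ) ≤ 9)]
        exact min_le_min (le_of_eq (by ring)) (by norm_num)
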